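/- The two distinct non-semisymmetric periodic orbits with minimal periods u = 122222112221122111122222112211112211221 and v = 122211222221122111122222112211221111221 (length 39, alphabet {1,2}) satisfy m(\overline{u}) = m(\overline{v}) = √72400312134383876121601 / 88869071820 = 3.027746947835738…, and both attain their Markov value at exactly one position per minimal period. -/
import Mathlib

open Filter

/-- The `n`-th convergent of the continued fraction `[a 0; a 1, a 2, ...]`. -/
noncomputable def cfConv : ℕ → (ℕ → ℕ) → ℝ
  | 0, a => a 0
  | n+1, a => a 0 + 1 / cfConv n (fun i => a (i+1))

/-- Value of the infinite continued fraction `[a 0; a 1, a 2, ...]` (limit of convergents). -/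
noncomputable def cfVal (a : ℕ → ℕ) : ℝ := limUnder atTop (fun n => cfConv n a)

/-- `λ_k(a) = [a_k; a_{k+1}, …] + [0; a_{k-1}, a_{k-2}, …]`. -/
noncomputable def lam (a : ℤ → ℕ) (k : ℤ) : ℝ :=
  cfVal (fun n => a (k + n)) + (cfVal (fun n => a (k - 1 - n)))⁻¹

/-- The Markov value `m(a) = sup_k λ_k(a)`. -/
noncomputable def markov (a : ℤ → ℕ) : ℝ := ⨆ k : ℤ, lam a k

/-- The periodic bi-infinite sequence with period the word `w` (`w` at positions `0..len-1`). -/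
def periodize (w : List ℕ) : ℤ → ℕ := fun n => w.getD (n % (w.length : ℤ)).toNat 0

/-- A word is a palindrome if it equals its transpose (reversal). -/
def IsPalindrome (w : List ℕ) : Prop := w.reverse = w

/-- A word is semisymmetric if it is a palindrome or a concatenation of two palindromes. -/
def Semisymmetric (w : List ℕ) : Prop :=
  IsPalindrome w ∨ ∃ p q : List ℕ, w = p ++ q ∧ IsPalindrome p ∧ IsPalindrome q

def uWord : List ℕ := [1,2,2,2,2,2,1,1,2,2,2,1,1,2,2,1,1,1,1,2,2,2,2,2,1,1,2,2,1,1,1,1,2,2,1,1,2,2,1]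
def vWord : List ℕ := [1,2,2,2,1,1,2,2,2,2,2,1,1,2,2,1,1,1,1,2,2,2,2,2,1,1,2,2,1,1,2,2,1,1,1,1,2,2,1]

def Pu : List ℤ := [359166564951, 432952986296, 463842324454, 458693303488, 458698091126, 463818386264, 433091827798, 358692588789, 433234818211, 463103434199, 463130793929, 433098019561, 359157704199, 431970078868, 468770497394, 428137272716, 372572525731, 400519167269, 372243989640, 429122880989, 464499528211, 458581502239, 458713010849, 463841985161, 432936630679, 359224637250, 431949725059, 468776513261, 428118936629, 372632396755, 400374929024, 372633872091, 428114510621, 468795692629, 431830222843, 359628879314, 431958482911, 468154392289, 432090572729]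
def Qu : List ℤ := [253973429327, 179324594415, 192194753011, 189622636347, 192185177735, 179382046071, 253638294667, 253781285080, 179096065245, 194044053104, 179041345785, 254109601840, 252981661147, 181297227171, 179380824095, 262563676527, 234945571080, 234617034989, 263220748709, 177738143640, 192467454265, 189574195584, 192204437045, 179316246960, 254015146009, 253028240389, 181290058200, 179374663985, 262605211464, 234861203859, 234862679195, 262602260792, 179382040665, 181239896776, 253312980237, 253441240305, 180983376640, 181049421549, 253111015760]
def Ru : List ℤ := [253111015760, 253973429327, 179324594415, 192194753011, 189622636347, 192185177735, 179382046071, 253638294667, 253781285080, 179096065245, 194044053104, 179041345785, 254109601840, 252981661147, 181297227171, 179380824095, 262563676527, 234945571080, 234617034989, 263220748709, 177738143640, 192467454265, 189574195584, 192204437045, 179316246960, 254015146009, 253028240389, 181290058200, 179374663985, 262605211464, 234861203859, 234862679195, 262602260792, 179382040665, 181239896776, 253312980237, 253441240305, 180983376640, 181049421549]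
def Su : List ℤ := [178979556969, 105193135624, 74303797466, 79452818432, 79448030794, 74327735656, 105054294122, 179453533131, 104911303709, 75042687721, 75015327991, 105048102359, 178988417721, 106176043052, 69375624526, 110008849204, 165573596189, 137626954651, 165902132280, 109023240931, 73646593709, 79564619681, 79433111071, 74304136759, 105209491241, 178921484670, 106196396861, 69369608659, 110027185291, 165513725165, 137771192896, 165512249829, 110031611299, 69350429291, 106315899077, 178517242606, 106187639009, 69991729631, 106055549191]
def Pv : List ℤ := [359157971751, 433097941304, 463130807494, 463103431936, 433234819094, 358692587265, 433091831039, 463818372211, 458698177789, 458692803149, 463845245411, 432935966479, 359224676625, 431950280134, 468773677136, 428136526454, 372572814505, 400519060199, 372244035066, 429122864771, 464499544429, 458581414693, 458713513451, 463839050639, 432953728753, 359166258024, 432090663361, 468154377599, 431958486299, 359628877741, 431830223726, 468795690464, 428114523598, 372633828189, 400375035211, 372632109554, 428119679503, 468773348209, 431969433161]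
def Qv : List ℤ := [254109791135, 179041313439, 194044058755, 179096064555, 253781284439, 253638296384, 179382040665, 192185214040, 189622429509, 192195963320, 179317544985, 254014521184, 253028834839, 181288917675, 179382040835, 262563219039, 234945752784, 234616973345, 263220777917, 177738143640, 192467418601, 189574403112, 192203221085, 179323328736, 253973864857, 253110799465, 181049459520, 180983370989, 253441242120, 253312979547, 181239896135, 179382046071, 262602229867, 234862741480, 234861022845, 262605667137, 179373452896, 181298329725, 252981282992]
def Rv : List ℤ := [252981282992, 254109791135, 179041313439, 194044058755, 179096064555, 253781284439, 253638296384, 179382040665, 192185214040, 189622429509, 192195963320, 179317544985, 254014521184, 253028834839, 181288917675, 179382040835, 262563219039, 234945752784, 234616973345, 263220777917, 177738143640, 192467418601, 189574403112, 192203221085, 179323328736, 253973864857, 253110799465, 181049459520, 180983370989, 253441242120, 253312979547, 181239896135, 179382046071, 262602229867, 234862741480, 234861022845, 262605667137, 179373452896, 181298329725]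
def Sv : List ℤ := [178988150169, 105048180616, 75015314426, 75042689984, 104911302826, 179453534655, 105054290881, 74327749709, 79447944131, 79453318771, 74300876509, 105210155441, 178921445295, 106195841786, 69372444784, 110009595466, 165573307415, 137627061721, 165902086854, 109023257149, 73646577491, 79564707227, 79432608469, 74307071281, 105192393167, 178979863896, 106055458559, 69991744321, 106187635621, 178517244179, 106315898194, 69350431456, 110031598322, 165512293731, 137771086709, 165514012366, 110026442417, 69372773711, 106176688759]

lemma cfConv_ge_one : ∀ (n : ℕ) (a : ℕ → ℕ), (∀ m, 1 ≤ a m) → (1:ℝ) ≤ cfConv n a := by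
  intro n
  induction n with
  | zero => intro a ha; simpa [cfConv] using by exact_mod_cast ha 0
  | succ n ih =>
    intro a ha
    have h1 := ih (fun i => a (i+1)) (fun m => ha (m+1))
    have h0 : (1:ℝ) ≤ (a 0 : ℝ) := by exact_mod_cast ha 0
    have : 0 < cfConv n (fun i => a (i+1)) := lt_of_lt_of_le one_pos h1
    rw [cfConv]
    have : 0 ≤ 1 / cfConv n (fun i => a (i+1)) := by positivity
    linarith

lemma cfConv_le_three : ∀ (n : ℕ) (a : ℕ → ℕ), (∀ m, 1 ≤ a m) → (∀ m, a m ≤ 2) →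
    cfConv n a ≤ 3 := by
  intro n
  induction n with
  | zero =>
    intro a ha hb
    have : (a 0 : ℝ) ≤ 2 := by exact_mod_cast hb 0
    show (a 0 : ℝ) ≤ 3
    linarith
  | succ n ih =>
    intro a ha hb
    have h1 := cfConv_ge_one n (fun i => a (i+1)) (fun m => ha (m+1))
    have h0 : (a 0 : ℝ) ≤ 2 := by exact_mod_cast hb 0
    rw [cfConv]
    have h2 : 1 / cfConv n (fun i => a (i+1)) ≤ 1 := by
      rw [div_le_one (by linarith)]; linarith
    linarith

lemma cfConv_succ_ge : ∀ (n : ℕ) (a : ℕ → ℕ), (∀ m, 1 ≤ a m) → (∀ m, a m ≤ 2) →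
    4/3 ≤ cfConv (n+1) a := by
  intro n a ha hb
  have h1 := cfConv_ge_one n (fun i => a (i+1)) (fun m => ha (m+1))
  have h3 := cfConv_le_three n (fun i => a (i+1)) (fun m => ha (m+1)) (fun m => hb (m+1))
  have h0 : (1:ℝ) ≤ (a 0 : ℝ) := by exact_mod_cast ha 0
  rw [cfConv]
  have : 1/3 ≤ 1 / cfConv n (fun i => a (i+1)) := by
    rw [div_le_div_iff₀ (by norm_num) (by linarith)]; linarith
  linarith

lemma cf_key : ∀ (n : ℕ) (a : ℕ → ℕ) (x : ℕ → ℝ), (∀ m, 1 ≤ a m) → (∀ m, a m ≤ 2) →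
    (∀ m, 4/3 ≤ x m ∧ x m ≤ 3) → (∀ m, x m = a m + 1 / x (m+1)) →
    |cfConv (n+1) a - x 0| ≤ 2 * (9/16)^n := by
  intro n
  induction n with
  | zero =>
    intro a x ha hb hx hr
    have h1 : (1:ℝ) ≤ (a 1 : ℝ) := by exact_mod_cast ha 1
    have hx1 := hx 1
    have e : cfConv 1 a = (a 0 : ℝ) + 1 / (a 1 : ℝ) := by rw [cfConv]; rfl
    rw [e, hr 0]
    have h2 : 0 < (1:ℝ) / (a 1 : ℝ) := by positivity
    have h3 : (1:ℝ) / (a 1 : ℝ) ≤ 1 := by rw [div_le_one (by linarith)]; linarith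
    have hx1p : (0:ℝ) < x 1 := by linarith [hx1.1]
    have h4 : 0 < (1:ℝ) / x 1 := by positivity
    have h5 : (1:ℝ) / x 1 ≤ 1 := by rw [div_le_one (by linarith)]; linarith
    rw [abs_le]; constructor <;> [skip; skip] <;> · simp only [pow_zero]; nlinarith
  | succ n ih =>
    intro a x ha hb hx hr
    set a' : ℕ → ℕ := fun i => a (i+1) with ha'
    set c := cfConv (n+1) a' with hc
    have hc1 : 4/3 ≤ c := cfConv_succ_ge n a' (fun m => ha (m+1)) (fun m => hb (m+1))
    have hc3 : c ≤ 3 := cfConv_le_three (n+1) a' (fun m => ha (m+1)) (fun m => hb (m+1))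
    have hx1 := hx 1
    have IH := ih a' (fun m => x (m+1)) (fun m => ha (m+1)) (fun m => hb (m+1))
      (fun m => hx (m+1)) (fun m => hr (m+1))
    have e : cfConv (n+2) a = (a 0 : ℝ) + 1 / c := by rw [cfConv]
    rw [e, hr 0]
    have hc0 : c ≠ 0 := by positivity
    have hx10 : x 1 ≠ 0 := by intro h; rw [h] at hx1; linarith [hx1.1]
    have hne : (a 0 : ℝ) + 1 / c - ((a 0 : ℝ) + 1 / x 1) = (x 1 - c) / (c * x 1) := by
      rw [show (a 0 : ℝ) + 1 / c - ((a 0 : ℝ) + 1 / x 1) = 1/c - 1/x 1 by ring,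
        div_sub_div _ _ hc0 hx10, one_mul, mul_one]
    rw [hne, abs_div, abs_of_pos (by nlinarith : (0:ℝ) < c * x 1)]
    have h16 : (16:ℝ)/9 ≤ c * x 1 := by nlinarith
    have habs : |x 1 - c| ≤ 2 * (9/16)^n := by
      rw [abs_sub_comm]; exact IH
    calc |x 1 - c| / (c * x 1) ≤ (2 * (9/16)^n) / (16/9) := by
          apply div_le_div₀ (by positivity) habs (by norm_num) h16
      _ = 2 * (9/16)^(n+1) := by ring

lemma cfVal_eq (a : ℕ → ℕ) (x : ℕ → ℝ) (ha : ∀ m, 1 ≤ a m) (hb : ∀ m, a m ≤ 2)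
    (hx : ∀ m, 4/3 ≤ x m ∧ x m ≤ 3) (hr : ∀ m, x m = a m + 1 / x (m+1)) :
    cfVal a = x 0 := by
  have htd : Tendsto (fun n => cfConv n a) atTop (nhds (x 0)) := by
    rw [← tendsto_add_atTop_iff_nat 1]
    rw [← tendsto_sub_nhds_zero_iff]
    have hg : Tendsto (fun n : ℕ => 2 * (9/16:ℝ)^n) atTop (nhds 0) := by
      simpa using (tendsto_pow_atTop_nhds_zero_of_lt_one (by norm_num : (0:ℝ) ≤ 9/16)
        (by norm_num)).const_mul 2
    exact squeeze_zero_norm (fun n => by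
      simpa [Real.norm_eq_abs] using cf_key n a x ha hb hx hr) hg
  exact htd.limUnder_eq

lemma surd_lt (s' p' D : ℤ) (hD : 0 < D) (hlt : (s' - p')^2 < D) :
    ((s':ℝ) - p') < Real.sqrt (D:ℝ) := by
  have ht2 : Real.sqrt (D:ℝ) ^ 2 = (D:ℝ) := Real.sq_sqrt (by exact_mod_cast hD.le)
  have ht0 : 0 < Real.sqrt (D:ℝ) := Real.sqrt_pos.2 (by exact_mod_cast hD)
  have h : ((s':ℝ) - p')^2 < Real.sqrt (D:ℝ)^2 := by
    rw [ht2]; exact_mod_cast hlt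
  nlinarith

lemma surd_step (a : ℕ) (p q s p' q' s' D : ℤ) (hD : 0 < D)
    (hq : 0 < q) (hq' : 0 < q') (hlt : (s' - p')^2 < D)
    (hsum : p - s - 2*a*q + (p' - s') = 0)
    (hprod : (p - s - 2*(a:ℤ)*q) * (p' - s') + D = 4*q*q') :
    ((p:ℝ) - s + Real.sqrt (D:ℝ))/(2*q) = (a:ℝ) + 1/(((p':ℝ) - s' + Real.sqrt (D:ℝ))/(2*q')) := by
  set t := Real.sqrt (D:ℝ) with htdef
  have ht2 : t ^ 2 = (D:ℝ) := Real.sq_sqrt (by exact_mod_cast hD.le)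
  have hden : 0 < (p':ℝ) - s' + t := by have := surd_lt s' p' D hD hlt; linarith
  have hqR : (0:ℝ) < (q:ℝ) := by exact_mod_cast hq
  have hq'R : (0:ℝ) < (q':ℝ) := by exact_mod_cast hq'
  have hsumR : (p:ℝ) - s - 2*a*q + ((p':ℝ) - s') = 0 := by exact_mod_cast hsum
  have hprodR : ((p:ℝ) - s - 2*(a:ℝ)*q) * ((p':ℝ) - s') + (D:ℝ) = 4*q*q' := by exact_mod_cast hprod
  rw [one_div, inv_div]
  have hre : (a:ℝ) + 2*q'/((p':ℝ) - s' + t) = ((a:ℝ)*((p':ℝ) - s' + t) + 2*q')/((p':ℝ) - s' + t) := by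
    field_simp
  rw [hre, div_eq_div_iff (by positivity) (by linarith)]
  linear_combination t * hsumR + hprodR + ht2

lemma surd_add (p q r s D : ℤ) (hD : 0 < D) (hq : 0 < q) (hr : 0 < r)
    (h : (p - s)^2 + 4*q*r = D) :
    ((p:ℝ) - s + Real.sqrt (D:ℝ))/(2*q) + (((p:ℝ) - s + Real.sqrt (D:ℝ))/(2*r))⁻¹
      = Real.sqrt (D:ℝ) / (q:ℝ) := by
  set t := Real.sqrt (D:ℝ) with htdef
  have ht2 : t ^ 2 = (D:ℝ) := Real.sq_sqrt (by exact_mod_cast hD.le)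
  have hlt : (s - p)^2 < D := by nlinarith
  have hden : 0 < (p:ℝ) - s + t := by have := surd_lt s p D hD hlt; linarith
  have hqR : (0:ℝ) < (q:ℝ) := by exact_mod_cast hq
  have hrR : (0:ℝ) < (r:ℝ) := by exact_mod_cast hr
  have hR : ((p:ℝ) - s)^2 + 4*q*r = (D:ℝ) := by exact_mod_cast h
  rw [inv_div, div_add_div _ _ (by positivity) (by linarith), div_eq_div_iff (by positivity) (by positivity)]
  linear_combination (q:ℝ) * hR - (q:ℝ) * ht2

noncomputable def surdX (P S Q : List ℤ) (D : ℤ) (j : ℤ) : ℝ :=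
  (((P.getD (j % 39).toNat 0 : ℤ) : ℝ) - ((S.getD (j % 39).toNat 0 : ℤ) : ℝ) + Real.sqrt (D:ℝ)) /
    (2 * ((Q.getD (j % 39).toNat 0 : ℤ) : ℝ))

lemma hidx : ∀ j : ℤ, (j % 39).toNat < 39 := by intro j; omega

lemma bounds_of_rec (b : ℤ → ℕ) (X : ℤ → ℝ) (σ : ℤ → ℤ)
    (hb1 : ∀ j, 1 ≤ b j) (hb2 : ∀ j, b j ≤ 2)
    (hpos : ∀ j, 0 < X j) (hrec : ∀ j, X j = b j + 1 / X (σ j)) :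
    ∀ j, 4/3 ≤ X j ∧ X j ≤ 3 := by
  have h1 : ∀ j, 1 ≤ X j := by
    intro j
    rw [hrec j]
    have hp := hpos (σ j)
    have h01 : 0 < 1 / X (σ j) := by positivity
    have : (1:ℝ) ≤ b j := by exact_mod_cast hb1 j
    linarith
  have h3 : ∀ j, X j ≤ 3 := by
    intro j
    rw [hrec j]
    have h := h1 (σ j)
    have h2 : 1 / X (σ j) ≤ 1 := by rw [div_le_one (by linarith)]; linarith
    have : (b j:ℝ) ≤ 2 := by exact_mod_cast hb2 j
    linarith
  intro j
  refine ⟨?_, h3 j⟩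
  rw [hrec j]
  have h := h1 (σ j)
  have h2 := h3 (σ j)
  have h4 : 1/3 ≤ 1 / X (σ j) := by
    rw [div_le_div_iff₀ (by norm_num) (by linarith)]; linarith
  have : (1:ℝ) ≤ b j := by exact_mod_cast hb1 j
  linarith

lemma word_lam (w : List ℕ) (P Q R S : List ℤ) (D : ℤ)
    (hw : w.length = 39) (hDpos : 0 < D)
    (ha1 : ∀ i < 39, 1 ≤ w.getD i 0) (ha2 : ∀ i < 39, w.getD i 0 ≤ 2)
    (hq : ∀ i < 39, 0 < Q.getD i 0) (hr : ∀ i < 39, 0 < R.getD i 0)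
    (hPS : ∀ i < 39, (P.getD i 0 - S.getD i 0)^2 + 4 * Q.getD i 0 * R.getD i 0 = D)
    (hF1 : ∀ i < 39, P.getD i 0 - S.getD i 0 - 2 * (w.getD i 0 : ℤ) * Q.getD i 0
        + (P.getD ((i+1)%39) 0 - S.getD ((i+1)%39) 0) = 0)
    (hF2 : ∀ i < 39, (P.getD i 0 - S.getD i 0 - 2 * (w.getD i 0:ℤ) * Q.getD i 0)
        * (P.getD ((i+1)%39) 0 - S.getD ((i+1)%39) 0) + D = 4 * Q.getD i 0 * Q.getD ((i+1)%39) 0)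
    (hB1 : ∀ i < 39, P.getD i 0 - S.getD i 0 - 2 * (w.getD ((i+38)%39) 0:ℤ) * R.getD i 0
        + (P.getD ((i+38)%39) 0 - S.getD ((i+38)%39) 0) = 0)
    (hB2 : ∀ i < 39, (P.getD i 0 - S.getD i 0 - 2 * (w.getD ((i+38)%39) 0:ℤ) * R.getD i 0)
        * (P.getD ((i+38)%39) 0 - S.getD ((i+38)%39) 0) + D = 4 * R.getD i 0 * R.getD ((i+38)%39) 0) :
    ∀ k : ℤ, lam (periodize w) k = Real.sqrt (D:ℝ) / ((Q.getD (k % 39).toNat 0 : ℤ) : ℝ) := by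
  have hper : ∀ j : ℤ, periodize w j = w.getD (j % 39).toNat 0 := by
    intro j; simp [periodize, hw]
  have hlt : ∀ i < 39, (S.getD i 0 - P.getD i 0)^2 < D := by
    intro i hi
    have h1 := hPS i hi; have h2 := hq i hi; have h3 := hr i hi
    nlinarith
  -- forward recurrence
  have recX : ∀ j : ℤ, surdX P S Q D j = (w.getD (j % 39).toNat 0 : ℝ) + 1 / surdX P S Q D (j+1) := by
    intro j
    have hi := hidx j
    have hnext : ((j+1) % 39).toNat = ((j % 39).toNat + 1) % 39 := by omega
    have hi' : ((j % 39).toNat + 1) % 39 < 39 := Nat.mod_lt _ (by norm_num)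
    simp only [surdX, hnext]
    exact surd_step (w.getD (j % 39).toNat 0) _ _ _ _ _ _ D hDpos (hq _ hi) (hq _ hi')
      (hlt _ hi') (hF1 _ hi) (hF2 _ hi)
  -- backward recurrence
  have recY : ∀ j : ℤ, surdX P S R D j = (w.getD ((j-1) % 39).toNat 0 : ℝ) + 1 / surdX P S R D (j-1) := by
    intro j
    have hi := hidx j
    have hprev : ((j-1) % 39).toNat = ((j % 39).toNat + 38) % 39 := by omega
    have hi' : ((j % 39).toNat + 38) % 39 < 39 := Nat.mod_lt _ (by norm_num)
    simp only [surdX, hprev]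
    exact surd_step (w.getD (((j % 39).toNat + 38) % 39) 0) _ _ _ _ _ _ D hDpos (hr _ hi) (hr _ hi')
      (hlt _ hi') (hB1 _ hi) (hB2 _ hi)
  -- positivity
  have posQ : ∀ j : ℤ, 0 < surdX P S Q D j := by
    intro j
    have hi := hidx j
    have h1 := surd_lt _ _ _ hDpos (hlt _ hi)
    have h2 : (0:ℝ) < ((Q.getD (j % 39).toNat 0 : ℤ):ℝ) := by exact_mod_cast hq _ hi
    apply div_pos (by linarith) (by linarith)
  have posR : ∀ j : ℤ, 0 < surdX P S R D j := by
    intro j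
    have hi := hidx j
    have h1 := surd_lt _ _ _ hDpos (hlt _ hi)
    have h2 : (0:ℝ) < ((R.getD (j % 39).toNat 0 : ℤ):ℝ) := by exact_mod_cast hr _ hi
    apply div_pos (by linarith) (by linarith)
  -- bounds
  have hb1 : ∀ j : ℤ, 1 ≤ periodize w j := by
    intro j; rw [hper j]; exact ha1 _ (hidx j)
  have hb2 : ∀ j : ℤ, periodize w j ≤ 2 := by
    intro j; rw [hper j]; exact ha2 _ (hidx j)
  have recX' : ∀ j : ℤ, surdX P S Q D j = (periodize w j : ℝ) + 1 / surdX P S Q D (j+1) := by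
    intro j; rw [hper j]; exact recX j
  have recY' : ∀ j : ℤ, surdX P S R D j = (periodize w (j-1) : ℝ) + 1 / surdX P S R D (j-1) := by
    intro j; rw [hper (j-1)]; exact recY j
  have bX := bounds_of_rec (periodize w) (surdX P S Q D) (fun j => j+1) hb1 hb2 posQ recX'
  have bY := bounds_of_rec (fun j => periodize w (j-1)) (surdX P S R D) (fun j => j-1)
    (fun j => hb1 (j-1)) (fun j => hb2 (j-1)) posR recY'
  intro k
  have h1 : cfVal (fun n : ℕ => periodize w (k + n)) = surdX P S Q D k := by
    have := cfVal_eq (fun n : ℕ => periodize w (k + n)) (fun n : ℕ => surdX P S Q D (k + n))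
      (fun m => hb1 _) (fun m => hb2 _) (fun m => bX _)
      (fun m => by
        have := recX' (k + m)
        rw [show (k + (m:ℤ)) + 1 = k + ((m:ℕ)+1 : ℕ) by push_cast; ring] at this
        exact this)
    simpa using this
  have h2 : cfVal (fun n : ℕ => periodize w (k - 1 - n)) = surdX P S R D k := by
    have := cfVal_eq (fun n : ℕ => periodize w (k - 1 - n)) (fun n : ℕ => surdX P S R D (k - n))
      (fun m => hb1 _) (fun m => hb2 _) (fun m => bY _)
      (fun m => by
        have h := recY' (k - m)
        show surdX P S R D (k - m) = (periodize w (k - 1 - m) : ℝ) + 1 / surdX P S R D (k - ((m:ℕ)+1:ℕ))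
        rw [show k - 1 - (m:ℤ) = (k - (m:ℤ)) - 1 by ring,
          show (k - (((m:ℕ)+1:ℕ):ℤ)) = (k - (m:ℤ)) - 1 by push_cast; ring]
        exact h)
    simpa using this
  rw [lam, h1, h2]
  have hi := hidx k
  simp only [surdX]
  exact surd_add _ _ _ _ D hDpos (hq _ hi) (hr _ hi) (hPS _ hi)

lemma word_final (w : List ℕ) (P Q R S : List ℤ) (D qmin : ℤ)
    (hw : w.length = 39) (hDpos : 0 < D)
    (ha1 : ∀ i < 39, 1 ≤ w.getD i 0) (ha2 : ∀ i < 39, w.getD i 0 ≤ 2)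
    (hq : ∀ i < 39, 0 < Q.getD i 0) (hr : ∀ i < 39, 0 < R.getD i 0)
    (hPS : ∀ i < 39, (P.getD i 0 - S.getD i 0)^2 + 4 * Q.getD i 0 * R.getD i 0 = D)
    (hF1 : ∀ i < 39, P.getD i 0 - S.getD i 0 - 2 * (w.getD i 0 : ℤ) * Q.getD i 0
        + (P.getD ((i+1)%39) 0 - S.getD ((i+1)%39) 0) = 0)
    (hF2 : ∀ i < 39, (P.getD i 0 - S.getD i 0 - 2 * (w.getD i 0:ℤ) * Q.getD i 0)
        * (P.getD ((i+1)%39) 0 - S.getD ((i+1)%39) 0) + D = 4 * Q.getD i 0 * Q.getD ((i+1)%39) 0)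
    (hB1 : ∀ i < 39, P.getD i 0 - S.getD i 0 - 2 * (w.getD ((i+38)%39) 0:ℤ) * R.getD i 0
        + (P.getD ((i+38)%39) 0 - S.getD ((i+38)%39) 0) = 0)
    (hB2 : ∀ i < 39, (P.getD i 0 - S.getD i 0 - 2 * (w.getD ((i+38)%39) 0:ℤ) * R.getD i 0)
        * (P.getD ((i+38)%39) 0 - S.getD ((i+38)%39) 0) + D = 4 * R.getD i 0 * R.getD ((i+38)%39) 0)
    (hqmin : 0 < qmin) (hmin : ∀ i < 39, qmin ≤ Q.getD i 0) (h19 : Q.getD 19 0 = qmin)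
    (huni : ∀ i < 39, Q.getD i 0 = qmin → i = 19) :
    markov (periodize w) = Real.sqrt (D:ℝ) / (qmin:ℝ) ∧
    ∃! k : ℤ, 0 ≤ k ∧ k < 39 ∧ lam (periodize w) k = markov (periodize w) := by
  have hlam := word_lam w P Q R S D hw hDpos ha1 ha2 hq hr hPS hF1 hF2 hB1 hB2
  have hsq : 0 < Real.sqrt (D:ℝ) := Real.sqrt_pos.2 (by exact_mod_cast hDpos)
  have hub : ∀ k : ℤ, lam (periodize w) k ≤ Real.sqrt (D:ℝ) / (qmin:ℝ) := by
    intro k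
    rw [hlam k]
    have hi := hidx k
    have h1 : (0:ℝ) < (qmin:ℝ) := by exact_mod_cast hqmin
    have h2 : (qmin:ℝ) ≤ ((Q.getD (k % 39).toNat 0 : ℤ):ℝ) := by exact_mod_cast hmin _ hi
    gcongr
  have hi19 : ((19:ℤ) % 39).toNat = 19 := by decide
  have h19' : lam (periodize w) 19 = Real.sqrt (D:ℝ) / (qmin:ℝ) := by
    rw [hlam 19, hi19, h19]
  have hmk : markov (periodize w) = Real.sqrt (D:ℝ) / (qmin:ℝ) := by
    apply le_antisymm (ciSup_le hub)
    rw [← h19']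
    exact le_ciSup ⟨Real.sqrt (D:ℝ) / (qmin:ℝ), by rintro x ⟨k, rfl⟩; exact hub k⟩ 19
  refine ⟨hmk, 19, ⟨by norm_num, by norm_num, by rw [h19', hmk]⟩, ?_⟩
  rintro k ⟨hk0, hk39, hk⟩
  rw [hmk, hlam k] at hk
  have hi := hidx k
  have hQi : (0:ℝ) < ((Q.getD (k % 39).toNat 0 : ℤ):ℝ) := by exact_mod_cast hq _ hi
  have hqR : (0:ℝ) < (qmin:ℝ) := by exact_mod_cast hqmin
  rw [div_eq_div_iff (by positivity) (by positivity)] at hk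
  have hZR : ((Q.getD (k % 39).toNat 0 : ℤ):ℝ) = (qmin:ℝ) := by
    have := mul_left_cancel₀ (ne_of_gt hsq) (by linarith [hk] : Real.sqrt (D:ℝ) * (qmin:ℝ) = Real.sqrt (D:ℝ) * ((Q.getD (k % 39).toNat 0 : ℤ):ℝ))
    linarith
  have hZ : Q.getD (k % 39).toNat 0 = qmin := by exact_mod_cast hZR
  have h19'' := huni _ hi hZ
  omega

instance (w : List ℕ) : Decidable (IsPalindrome w) :=
  inferInstanceAs (Decidable (w.reverse = w))

lemma not_semisym (w : List ℕ)
    (h : ∀ i ≤ w.length, ¬(IsPalindrome (w.take i) ∧ IsPalindrome (w.drop i))) :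
    ¬ Semisymmetric w := by
  rintro (hp | ⟨p, q, rfl, hp, hq⟩)
  · exact h w.length le_rfl ⟨by simpa [IsPalindrome] using hp, by simp [IsPalindrome]⟩
  · exact h p.length (by simp)
      ⟨by simpa [IsPalindrome, List.take_left] using hp,
       by simpa [IsPalindrome, List.drop_left] using hq⟩


/-- The two distinct non-semisymmetric periodic orbits of minimal periods `u` and `v`
(length 39) have the same Markov value `√72400312134383876121601 / 88869071820`, and each
attains its Markov value at exactly one position per minimal period. -/
theorem same_markov_value_second_pair :
    uWord ≠ vWord ∧ ¬ Semisymmetric uWord ∧ ¬ Semisymmetric vWord ∧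
    markov (periodize uWord) = Real.sqrt 72400312134383876121601 / 88869071820 ∧
    markov (periodize vWord) = Real.sqrt 72400312134383876121601 / 88869071820 ∧
    (∃! k : ℤ, 0 ≤ k ∧ k < 39 ∧ lam (periodize uWord) k = markov (periodize uWord)) ∧
    (∃! k : ℤ, 0 ≤ k ∧ k < 39 ∧ lam (periodize vWord) k = markov (periodize vWord)) := by
  have hsqrt : Real.sqrt ((289601248537535504486404:ℤ):ℝ) / ((177738143640:ℤ):ℝ)
      = Real.sqrt 72400312134383876121601 / 88869071820 := by
    rw [show ((289601248537535504486404:ℤ):ℝ) = 2^2 * 72400312134383876121601 by norm_num,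
      Real.sqrt_mul (by positivity), Real.sqrt_sq (by norm_num),
      show ((177738143640:ℤ):ℝ) = 177738143640 by norm_num]
    ring
  obtain ⟨hmU, huU⟩ := word_final uWord Pu Qu Ru Su 289601248537535504486404 177738143640
    (by decide) (by decide) (by decide) (by decide) (by decide) (by decide) (by decide)
    (by decide) (by decide) (by decide) (by decide) (by decide) (by decide) (by decide)
    (by decide)
  obtain ⟨hmV, huV⟩ := word_final vWord Pv Qv Rv Sv 289601248537535504486404 177738143640
    (by decide) (by decide) (by decide) (by decide) (by decide) (by decide) (by decide)
    (by decide) (by decide) (by decide) (by decide) (by decide) (by decide) (by decide)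
    (by decide)
  exact ⟨by decide, not_semisym _ (by decide), not_semisym _ (by decide),
    hmU.trans hsqrt, hmV.trans hsqrt, huU, huV⟩
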